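/- Let n > k ≥ 0 be integers. For every g : {−1,1}^n → ℝ and every J ⊆ [n] with |J| = k, Inf_J(g) − ĝ(J)² = 2 · ∑_{S⊆[n], |S|=k+1, S⊇J} ∫₀^∞ e^{−2t} ‖P_t ∂_S g‖₂² dt. -/
import Mathlib


open Finset MeasureTheory
open scoped BigOperators Classical

/-- Expectation over the uniform measure on the hypercube `{-1,1}^n` (coded by `Bool`). -/
noncomputable def expectation {n : ℕ} (f : (Fin n → Bool) → ℝ) : ℝ :=
  (∑ x : Fin n → Bool, f x) / 2 ^ n

/-- Probability of an event under the uniform measure on the hypercube. -/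
noncomputable def pr {n : ℕ} (P : (Fin n → Bool) → Prop) : ℝ :=
  expectation (fun x => if P x then (1 : ℝ) else 0)

/-- Walsh function `χ_S`. -/
noncomputable def walsh {n : ℕ} (S : Finset (Fin n)) (x : Fin n → Bool) : ℝ :=
  ∏ j ∈ S, (if x j then (1 : ℝ) else -1)

/-- Fourier--Walsh coefficient `f̂(S)`. -/
noncomputable def fwCoeff {n : ℕ} (f : (Fin n → Bool) → ℝ) (S : Finset (Fin n)) : ℝ :=
  expectation (fun x => f x * walsh S x)

/-- T-influence `Inf_S(f) = ∑_{T ⊇ S} f̂(T)^2`. -/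
noncomputable def TInf {n : ℕ} (f : (Fin n → Bool) → ℝ) (S : Finset (Fin n)) : ℝ :=
  ∑ T ∈ Finset.univ.filter (fun T : Finset (Fin n) => S ⊆ T), fwCoeff f T ^ 2

/-- Fourier weight at degrees `≥ d`. -/
noncomputable def Wge {n : ℕ} (d : ℕ) (f : (Fin n → Bool) → ℝ) : ℝ :=
  ∑ T ∈ Finset.univ.filter (fun T : Finset (Fin n) => d ≤ T.card), fwCoeff f T ^ 2

/-- Flip coordinate `i`. -/
def flipBit {n : ℕ} (y : Fin n → Bool) (i : Fin n) : Fin n → Bool :=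
  Function.update y i (!(y i))

/-- `i` is `S`-pivotal for `f` on input `x`. -/
def pivotal {n : ℕ} (f : (Fin n → Bool) → ℝ) (S : Finset (Fin n)) (i : Fin n)
    (x : Fin n → Bool) : Prop :=
  ∃ y : Fin n → Bool, (∀ j, j ∉ S → y j = x j) ∧ f y ≠ f (flipBit y i)

/-- Joint influence `JInf_S(f)`. -/
noncomputable def JInf {n : ℕ} (f : (Fin n → Bool) → ℝ) (S : Finset (Fin n)) : ℝ :=
  pr (fun x => ∀ i ∈ S, pivotal f S i x)

/-- Single-bit discrete partial derivative. -/
noncomputable def deriv1 {n : ℕ} (i : Fin n) (f : (Fin n → Bool) → ℝ) :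
    (Fin n → Bool) → ℝ :=
  fun x => (f (Function.update x i true) - f (Function.update x i false)) / 2

/-- Multi-bit discrete partial derivative `∂_S f`. -/
noncomputable def derivS {n : ℕ} (S : Finset (Fin n)) (f : (Fin n → Bool) → ℝ) :
    (Fin n → Bool) → ℝ :=
  S.toList.foldr deriv1 f

/-- Heat semigroup `P_t`. -/
noncomputable def heat {n : ℕ} (t : ℝ) (g : (Fin n → Bool) → ℝ) : (Fin n → Bool) → ℝ :=
  fun x => ∑ S : Finset (Fin n), Real.exp (-(S.card : ℝ) * t) * fwCoeff g S * walsh S x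

/-- Squared `L²` norm. -/
noncomputable def norm2sq {n : ℕ} (g : (Fin n → Bool) → ℝ) : ℝ :=
  expectation (fun x => g x ^ 2)

/-- Total influence. -/
noncomputable def totinf {n : ℕ} (f : (Fin n → Bool) → ℝ) : ℝ :=
  ∑ i : Fin n, TInf f {i}


section Aux
open scoped symmDiff
variable {n : ℕ}

lemma expectation_sum {ι : Type*} (A : Finset ι) (F : ι → (Fin n → Bool) → ℝ) :
    expectation (fun x => ∑ i ∈ A, F i x) = ∑ i ∈ A, expectation (F i) := by
  unfold expectation
  rw [Finset.sum_comm, Finset.sum_div]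

lemma expectation_const_mul (c : ℝ) (f : (Fin n → Bool) → ℝ) :
    expectation (fun x => c * f x) = c * expectation f := by
  unfold expectation
  rw [← Finset.mul_sum, mul_div_assoc]

lemma expectation_zero : expectation (fun _ : Fin n → Bool => (0:ℝ)) = 0 := by
  simp [expectation]

lemma walsh_eq_prod_univ (S : Finset (Fin n)) (x : Fin n → Bool) :
    walsh S x = ∏ j, (if j ∈ S then (if x j then (1:ℝ) else -1) else 1) := by
  rw [Finset.prod_ite_mem, Finset.univ_inter, walsh]

lemma walsh_mul (S T : Finset (Fin n)) (x : Fin n → Bool) :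
    walsh S x * walsh T x = walsh (S ∆ T) x := by
  rw [walsh_eq_prod_univ, walsh_eq_prod_univ, walsh_eq_prod_univ, ← Finset.prod_mul_distrib]
  refine Finset.prod_congr rfl fun j _ => ?_
  by_cases hS : j ∈ S <;> by_cases hT : j ∈ T <;>
    simp [hS, hT, Finset.mem_symmDiff] <;> cases x j <;> norm_num

lemma walsh_update_mem {S : Finset (Fin n)} {i : Fin n} (hi : i ∈ S) (x : Fin n → Bool)
    (b : Bool) :
    walsh S (Function.update x i b) = (if b then (1:ℝ) else -1) * walsh (S.erase i) x := by
  rw [walsh, ← Finset.mul_prod_erase _ _ hi, Function.update_self]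
  congr 1
  refine Finset.prod_congr rfl fun j hj => ?_
  rw [Function.update_of_ne (Finset.ne_of_mem_erase hj)]

lemma walsh_update_notMem {S : Finset (Fin n)} {i : Fin n} (hi : i ∉ S) (x : Fin n → Bool)
    (b : Bool) :
    walsh S (Function.update x i b) = walsh S x := by
  refine Finset.prod_congr rfl fun j hj => ?_
  have : j ≠ i := by rintro rfl; exact hi hj
  rw [Function.update_of_ne this]

lemma expectation_walsh (S : Finset (Fin n)) :
    expectation (walsh S) = if S = ∅ then 1 else 0 := by
  by_cases hS : S = ∅
  · simp [hS, expectation, walsh, div_self (a := (2:ℝ)^n) (by positivity)]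
  · rw [if_neg hS]
    obtain ⟨i, hi⟩ := Finset.nonempty_iff_ne_empty.mpr hS
    have h0 : ∑ x : Fin n → Bool, walsh S x = 0 := by
      refine Finset.sum_involution (fun x _ => Function.update x i (!(x i))) ?_ ?_ ?_ ?_
      · intro x _
        rw [walsh_update_mem hi]
        have : walsh S x = (if x i then (1:ℝ) else -1) * walsh (S.erase i) x := by
          rw [walsh, ← Finset.mul_prod_erase _ _ hi]; rfl
        rw [this]; cases x i <;> simp
      · intro x _ _
        intro h
        have := congrFun h i
        simp only [Function.update_self] at this
        cases x i <;> simp_all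
      · intro x _; exact Finset.mem_univ _
      · intro x _
        funext j
        by_cases hj : j = i
        · subst hj; simp [Function.update_self]
        · simp [Function.update_of_ne hj]
    simp [expectation, h0]

lemma expectation_walsh_mul (S T : Finset (Fin n)) :
    expectation (fun x => walsh S x * walsh T x) = if S = T then 1 else 0 := by
  have : (fun x => walsh S x * walsh T x) = walsh (S ∆ T) := funext fun x => walsh_mul S T x
  rw [this, expectation_walsh]
  simp [symmDiff_eq_bot]

lemma sum_walsh_kernel (x y : Fin n → Bool) :
    ∑ S : Finset (Fin n), walsh S x * walsh S y = if x = y then (2:ℝ)^n else 0 := by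
  have h1 : ∀ S : Finset (Fin n), walsh S x * walsh S y
      = ∏ j ∈ S, (if x j = y j then (1:ℝ) else -1) := by
    intro S
    rw [walsh, walsh, ← Finset.prod_mul_distrib]
    refine Finset.prod_congr rfl fun j _ => ?_
    cases hx : x j <;> cases hy : y j <;> simp [hx, hy]
  simp_rw [h1]
  rw [← Finset.powerset_univ]
  have h2 := Finset.prod_add (fun j : Fin n => if x j = y j then (1:ℝ) else -1)
    (fun _ => (1:ℝ)) Finset.univ
  simp only [Finset.prod_const_one, mul_one] at h2
  rw [← h2]
  by_cases hxy : x = y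
  · subst hxy; simp; norm_num
  · rw [if_neg hxy]
    obtain ⟨j, hj⟩ : ∃ j, x j ≠ y j := by
      by_contra h
      push_neg at h
      exact hxy (funext h)
    refine Finset.prod_eq_zero (Finset.mem_univ j) ?_
    simp [hj]

lemma fwExpansion (f : (Fin n → Bool) → ℝ) (x : Fin n → Bool) :
    ∑ S : Finset (Fin n), fwCoeff f S * walsh S x = f x := by
  have : ∀ S : Finset (Fin n), fwCoeff f S * walsh S x
      = ∑ y : Fin n → Bool, f y * (walsh S y * walsh S x) / 2 ^ n := by
    intro S
    rw [fwCoeff, expectation, div_mul_eq_mul_div, Finset.sum_mul, Finset.sum_div]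
    exact Finset.sum_congr rfl fun y _ => by ring
  simp_rw [this]
  rw [Finset.sum_comm]
  have : ∀ y : Fin n → Bool, ∑ S : Finset (Fin n), f y * (walsh S y * walsh S x) / 2 ^ n
      = f y * (if y = x then (2:ℝ)^n else 0) / 2 ^ n := by
    intro y
    rw [← sum_walsh_kernel y x, Finset.mul_sum, Finset.sum_div]
  simp_rw [this]
  have h3 : ∀ y : Fin n → Bool, f y * (if y = x then (2:ℝ)^n else 0) / 2 ^ n
      = if y = x then f y else 0 := by
    intro y
    split
    · rw [mul_div_assoc, div_self (by positivity : (2:ℝ)^n ≠ 0), mul_one]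
    · simp
  simp_rw [h3]
  rw [Finset.sum_ite_eq' Finset.univ x]
  simp

end Aux
section Aux2
variable {n : ℕ}

lemma norm2sq_eq (f : (Fin n → Bool) → ℝ) :
    norm2sq f = ∑ S : Finset (Fin n), fwCoeff f S ^ 2 := by
  have h1 : (fun x : Fin n → Bool => f x ^ 2)
      = fun x => ∑ S : Finset (Fin n), fwCoeff f S * (f x * walsh S x) := by
    funext x
    rw [show f x ^ 2 = (∑ S : Finset (Fin n), fwCoeff f S * walsh S x) * f x by
      rw [fwExpansion f x, sq], Finset.sum_mul]
    exact Finset.sum_congr rfl fun S _ => by ring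
  rw [norm2sq, h1, expectation_sum]
  refine Finset.sum_congr rfl fun S _ => ?_
  rw [expectation_const_mul, ← fwCoeff, sq]

lemma fwCoeff_combo (a : Finset (Fin n) → ℝ) (T : Finset (Fin n)) :
    fwCoeff (fun x => ∑ S : Finset (Fin n), a S * walsh S x) T = a T := by
  rw [fwCoeff]
  have h1 : (fun x : Fin n → Bool => (∑ S : Finset (Fin n), a S * walsh S x) * walsh T x)
      = fun x => ∑ S : Finset (Fin n), a S * (walsh S x * walsh T x) := by
    funext x
    rw [Finset.sum_mul]
    exact Finset.sum_congr rfl fun S _ => by ring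
  rw [h1, expectation_sum]
  simp_rw [expectation_const_mul, expectation_walsh_mul]
  simp

lemma fwCoeff_heat (t : ℝ) (h : (Fin n → Bool) → ℝ) (T : Finset (Fin n)) :
    fwCoeff (heat t h) T = Real.exp (-(T.card : ℝ) * t) * fwCoeff h T :=
  fwCoeff_combo (fun S => Real.exp (-(S.card : ℝ) * t) * fwCoeff h S) T

lemma norm2sq_heat (t : ℝ) (h : (Fin n → Bool) → ℝ) :
    norm2sq (heat t h)
      = ∑ T : Finset (Fin n), Real.exp (-(2 * T.card : ℝ) * t) * fwCoeff h T ^ 2 := by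
  rw [norm2sq_eq]
  refine Finset.sum_congr rfl fun T _ => ?_
  rw [fwCoeff_heat, mul_pow, sq (Real.exp _), ← Real.exp_add]
  ring_nf

lemma fwCoeff_deriv1 (i : Fin n) (f : (Fin n → Bool) → ℝ) (T : Finset (Fin n)) :
    fwCoeff (deriv1 i f) T = if i ∈ T then 0 else fwCoeff f (insert i T) := by
  have hf : deriv1 i f = fun x => ∑ U : Finset (Fin n),
      fwCoeff f U * (if i ∈ U then walsh (U.erase i) x else 0) := by
    funext x
    rw [deriv1]
    conv_lhs => rw [← fwExpansion f (Function.update x i true),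
      ← fwExpansion f (Function.update x i false)]
    rw [← Finset.sum_sub_distrib, Finset.sum_div]
    refine Finset.sum_congr rfl fun U _ => ?_
    by_cases hi : i ∈ U
    · rw [walsh_update_mem hi, walsh_update_mem hi, if_pos hi]
      simp
    · rw [walsh_update_notMem hi, walsh_update_notMem hi, if_neg hi]
      simp
  rw [hf, fwCoeff]
  have h1 : (fun x : Fin n → Bool =>
      (∑ U : Finset (Fin n), fwCoeff f U * (if i ∈ U then walsh (U.erase i) x else 0))
        * walsh T x)
      = fun x => ∑ U : Finset (Fin n),
          fwCoeff f U * (if i ∈ U then walsh (U.erase i) x * walsh T x else 0) := by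
    funext x
    rw [Finset.sum_mul]
    refine Finset.sum_congr rfl fun U _ => ?_
    split <;> ring
  rw [h1, expectation_sum]
  have h2 : ∀ U : Finset (Fin n),
      expectation (fun x => fwCoeff f U * (if i ∈ U then walsh (U.erase i) x * walsh T x else 0))
      = fwCoeff f U * (if i ∈ U then (if U.erase i = T then 1 else 0) else 0) := by
    intro U
    rw [expectation_const_mul]
    congr 1
    by_cases hi : i ∈ U
    · simp only [if_pos hi]; rw [expectation_walsh_mul]
    · simp only [if_neg hi]; exact expectation_zero
  simp_rw [h2]
  by_cases hiT : i ∈ T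
  · rw [if_pos hiT]
    refine Finset.sum_eq_zero fun U _ => ?_
    by_cases hi : i ∈ U
    · have : U.erase i ≠ T := fun h => (Finset.notMem_erase i U) (h ▸ hiT)
      simp [hi, this]
    · simp [hi]
  · rw [if_neg hiT]
    have h3 : ∀ U : Finset (Fin n),
        fwCoeff f U * (if i ∈ U then (if U.erase i = T then 1 else 0) else 0)
        = if U = insert i T then fwCoeff f U else 0 := by
      intro U
      by_cases hU : U = insert i T
      · subst hU
        simp [Finset.mem_insert_self, Finset.erase_insert hiT]
      · rw [if_neg hU]
        by_cases hi : i ∈ U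
        · have : U.erase i ≠ T := by
            intro h
            exact hU (by rw [← h, Finset.insert_erase hi])
          simp [hi, this]
        · simp [hi]
    simp_rw [h3]
    rw [Finset.sum_ite_eq' Finset.univ (insert i T)]
    simp

lemma fwCoeff_foldr (f : (Fin n → Bool) → ℝ) :
    ∀ l : List (Fin n), l.Nodup → ∀ T : Finset (Fin n),
      fwCoeff (l.foldr deriv1 f) T
        = if Disjoint l.toFinset T then fwCoeff f (l.toFinset ∪ T) else 0 := by
  intro l
  induction l with
  | nil => intro _ T; simp
  | cons i l ih =>
    intro hnd T
    have hil : i ∉ l.toFinset := by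
      simp only [List.mem_toFinset]
      exact (List.nodup_cons.mp hnd).1
    have hl : l.Nodup := (List.nodup_cons.mp hnd).2
    rw [List.foldr_cons, fwCoeff_deriv1]
    by_cases hiT : i ∈ T
    · rw [if_pos hiT, if_neg]
      intro h
      exact (Finset.disjoint_left.mp h (by simp) hiT)
    · rw [if_neg hiT, ih hl (insert i T)]
      simp only [List.toFinset_cons, Finset.disjoint_insert_right,
        Finset.disjoint_insert_left, hil, hiT, not_false_iff, true_and,
        Finset.union_insert, Finset.insert_union]

lemma fwCoeff_derivS (S T : Finset (Fin n)) (g : (Fin n → Bool) → ℝ) :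
    fwCoeff (derivS S g) T = if Disjoint S T then fwCoeff g (S ∪ T) else 0 := by
  rw [derivS, fwCoeff_foldr g S.toList (Finset.nodup_toList S)]
  simp [Finset.toList_toFinset]

end Aux2
section Aux3
variable {n : ℕ}

lemma integral_exp_neg_coef {b : ℝ} (hb : 0 < b) :
    ∫ t in Set.Ioi (0:ℝ), Real.exp (-b * t) = b⁻¹ := by
  have h := MeasureTheory.integral_comp_mul_left_Ioi (fun u => Real.exp (-u)) 0 hb
  simp only [mul_zero, smul_eq_mul] at h
  simp_rw [neg_mul]
  rw [h, integral_exp_neg_Ioi]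
  simp

lemma integral_term (h : (Fin n → Bool) → ℝ) :
    ∫ t in Set.Ioi (0:ℝ), Real.exp (-2*t) * norm2sq (heat t h)
      = ∑ T : Finset (Fin n), fwCoeff h T ^ 2 * (2 * (T.card:ℝ) + 2)⁻¹ := by
  have h1 : ∀ t : ℝ, Real.exp (-2*t) * norm2sq (heat t h)
      = ∑ T : Finset (Fin n),
          fwCoeff h T ^ 2 * Real.exp (-(2*(T.card:ℝ)+2) * t) := by
    intro t
    rw [norm2sq_heat, Finset.mul_sum]
    refine Finset.sum_congr rfl fun T _ => ?_
    rw [show (-(2*(T.card:ℝ)+2) * t) = (-2*t) + (-(2 * (T.card:ℝ)) * t) by ring,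
      Real.exp_add]
    ring
  simp_rw [h1]
  rw [MeasureTheory.integral_finset_sum]
  · refine Finset.sum_congr rfl fun T _ => ?_
    rw [MeasureTheory.integral_const_mul, integral_exp_neg_coef (by positivity)]
  · intro T _
    exact ((exp_neg_integrableOn_Ioi 0 (by positivity : (0:ℝ) < 2*(T.card:ℝ)+2)).const_mul
      (fwCoeff h T ^ 2))

lemma count_lemma {k : ℕ} (J U : Finset (Fin n)) (hJ : J.card = k) (hJU : J ⊆ U) :
    (Finset.univ.filter (fun S : Finset (Fin n) => (S.card = k+1 ∧ J ⊆ S) ∧ S ⊆ U)).card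
      = U.card - k := by
  rw [← hJ, ← Finset.card_sdiff_of_subset hJU]
  symm
  refine Finset.card_bij (fun a _ => insert a J) ?_ ?_ ?_
  · intro a ha
    rw [Finset.mem_sdiff] at ha
    rw [Finset.mem_filter]
    refine ⟨Finset.mem_univ _, ⟨?_, Finset.subset_insert _ _⟩, ?_⟩
    · rw [Finset.card_insert_of_notMem ha.2, hJ]
    · rw [Finset.insert_subset_iff]; exact ⟨ha.1, hJU⟩
  · intro a ha b hb hab
    rw [Finset.mem_sdiff] at ha hb
    have hab' : insert a J = insert b J := hab
    have : a ∈ insert b J := hab' ▸ Finset.mem_insert_self a J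
    rcases Finset.mem_insert.mp this with h | h
    · exact h
    · exact absurd h ha.2
  · intro S hS
    rw [Finset.mem_filter] at hS
    obtain ⟨-, ⟨hcard, hJS⟩, hSU⟩ := hS
    have hc : (S \ J).card = 1 := by
      rw [Finset.card_sdiff_of_subset hJS, hcard, hJ, Nat.add_sub_cancel_left]
    obtain ⟨a, ha⟩ := Finset.card_eq_one.mp hc
    have haS : a ∈ S \ J := ha ▸ Finset.mem_singleton_self a
    rw [Finset.mem_sdiff] at haS
    refine ⟨a, Finset.mem_sdiff.mpr ⟨hSU haS.1, haS.2⟩, ?_⟩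
    have h2 : S \ J ∪ J = S := Finset.sdiff_union_of_subset hJS
    rw [ha, ← Finset.insert_eq] at h2
    exact h2

end Aux3
/-- integral representation of `Inf_J(g) - ĝ(J)²`. -/
theorem statement12 (n k : ℕ) (hk : k < n) (g : (Fin n → Bool) → ℝ)
    (J : Finset (Fin n)) (hJ : J.card = k) :
    TInf g J - fwCoeff g J ^ 2 =
      2 * ∑ S ∈ Finset.univ.filter (fun S : Finset (Fin n) => S.card = k + 1 ∧ J ⊆ S),
        ∫ t in Set.Ioi (0 : ℝ), Real.exp (-2 * t) * norm2sq (heat t (derivS S g)) := by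
  rw [Finset.mul_sum]
  have hstep : ∀ S ∈ Finset.univ.filter (fun S : Finset (Fin n) => S.card = k + 1 ∧ J ⊆ S),
      (2:ℝ) * ∫ t in Set.Ioi (0 : ℝ), Real.exp (-2 * t) * norm2sq (heat t (derivS S g))
        = ∑ U ∈ Finset.univ.filter (fun U : Finset (Fin n) => S ⊆ U),
            fwCoeff g U ^ 2 * (((U.card - k : ℕ)):ℝ)⁻¹ := by
    intro S hS
    rw [Finset.mem_filter] at hS
    obtain ⟨-, hcard, hJS⟩ := hS
    rw [integral_term, Finset.mul_sum]
    have h2 : ∀ T : Finset (Fin n),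
        2 * (fwCoeff (derivS S g) T ^ 2 * (2*(T.card:ℝ)+2)⁻¹)
        = if Disjoint S T then fwCoeff g (S ∪ T) ^ 2 * ((T.card:ℝ)+1)⁻¹ else 0 := by
      intro T
      rw [fwCoeff_derivS]
      split
      · rw [show (2*(T.card:ℝ)+2) = 2*((T.card:ℝ)+1) by ring, mul_inv]
        ring
      · simp
    simp_rw [h2]
    rw [← Finset.sum_filter]
    refine Finset.sum_nbij' (fun T => S ∪ T) (fun U => U \ S) ?_ ?_ ?_ ?_ ?_
    · intro T hT
      rw [Finset.mem_filter] at hT ⊢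
      exact ⟨Finset.mem_univ _, Finset.subset_union_left⟩
    · intro U hU
      rw [Finset.mem_filter] at hU ⊢
      exact ⟨Finset.mem_univ _, Finset.disjoint_sdiff⟩
    · intro T hT
      rw [Finset.mem_filter] at hT
      exact Finset.union_sdiff_cancel_left hT.2
    · intro U hU
      rw [Finset.mem_filter] at hU
      exact Finset.union_sdiff_of_subset hU.2
    · intro T hT
      rw [Finset.mem_filter] at hT
      congr 1
      have hc : (S ∪ T).card = S.card + T.card := Finset.card_union_of_disjoint hT.2
      rw [hc, hcard]
      rw [show k + 1 + T.card - k = T.card + 1 by omega]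
      push_cast
      ring_nf
  rw [Finset.sum_congr rfl hstep]
  rw [Finset.sum_comm' (s' := fun U => Finset.univ.filter
        (fun S : Finset (Fin n) => (S.card = k + 1 ∧ J ⊆ S) ∧ S ⊆ U))
      (t' := Finset.univ)
      (by intro S U; simp only [Finset.mem_filter, Finset.mem_univ, true_and]; tauto)]
  have hcount : ∀ U : Finset (Fin n),
      ∑ S ∈ Finset.univ.filter
          (fun S : Finset (Fin n) => (S.card = k + 1 ∧ J ⊆ S) ∧ S ⊆ U),
        fwCoeff g U ^ 2 * (((U.card - k : ℕ)):ℝ)⁻¹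
      = fwCoeff g U ^ 2 * (if J ⊆ U ∧ U ≠ J then 1 else 0) := by
    intro U
    rw [Finset.sum_const, nsmul_eq_mul]
    by_cases h1 : J ⊆ U ∧ U ≠ J
    · obtain ⟨hJU, hUJ⟩ := h1
      rw [count_lemma J U hJ hJU, if_pos ⟨hJU, hUJ⟩]
      have hlt : k < U.card := by
        rw [← hJ]
        exact Finset.card_lt_card (Finset.ssubset_iff_subset_ne.mpr ⟨hJU, Ne.symm hUJ⟩)
      have hne : ((U.card - k : ℕ) : ℝ) ≠ 0 := by
        have : 0 < U.card - k := by omega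
        positivity
      rw [mul_comm ((U.card - k : ℕ) : ℝ), mul_assoc, inv_mul_cancel₀ hne]
    · rw [if_neg h1]
      have hempty : (Finset.univ.filter
          (fun S : Finset (Fin n) => (S.card = k + 1 ∧ J ⊆ S) ∧ S ⊆ U)) = ∅ := by
        rw [Finset.filter_eq_empty_iff]
        intro S _
        rintro ⟨⟨hSc, hJS⟩, hSU⟩
        rcases not_and_or.mp h1 with h | h
        · exact h (hJS.trans hSU)
        · push_neg at h
          subst h
          have := Finset.card_le_card hSU
          omega
      rw [hempty]
      simp
  rw [Finset.sum_congr rfl (fun U _ => hcount U)]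
  have hfilter : (Finset.univ.filter (fun T : Finset (Fin n) => J ⊆ T)).erase J
      = Finset.univ.filter (fun U : Finset (Fin n) => J ⊆ U ∧ U ≠ J) := by
    ext U
    simp only [Finset.mem_erase, Finset.mem_filter, Finset.mem_univ, true_and]
    tauto
  have hJmem : J ∈ Finset.univ.filter (fun T : Finset (Fin n) => J ⊆ T) := by
    simp
  rw [TInf, ← Finset.sum_erase_add _ _ hJmem, hfilter]
  simp only [mul_ite, mul_one, mul_zero]
  rw [← Finset.sum_filter]
  ring
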